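/- The braid group B₃ = ⟨a, b | aba = bab⟩ is not co-Hopfian: there exists an injective endomorphism of B₃ that is not surjective. -/

import Mathlib

/-!
The element `z = (aba)²` is central in `B₃` and has exponent sum `6`. Twisting the identity by
`z`, `g ↦ g * z ^ e(g)` with `e` the exponent sum, is therefore a homomorphism that multiplies
exponent sums by `7`. It is injective, since an element of its kernel has exponent sum `0` and is
thus fixed by the twist, and it misses the generator `a`, whose exponent sum `1` is not divisible
by `7`.
-/

def B3Rels : Set (FreeGroup Bool) :=
  {FreeGroup.of true * FreeGroup.of false * FreeGroup.of true *
    (FreeGroup.of false * FreeGroup.of true * FreeGroup.of false)⁻¹}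

abbrev B3 : Type := PresentedGroup B3Rels

open Subgroup

theorem PresentedGroup.mem_center_of_commute_of {α : Type*} {rels : Set (FreeGroup α)}
    {z : PresentedGroup rels} (h : ∀ x, Commute z (of x)) :
    z ∈ center (PresentedGroup rels) := by
  rw [center_eq_iInf (closure_range_of rels)]
  simp only [mem_iInf, mem_centralizer_singleton_iff, Set.forall_mem_range]
  exact fun x => (h x).eq

section CentralTwist

variable {G : Type*} [Group G] {z : G} (hz : z ∈ center G) (χ : G →* Multiplicative ℤ)

def centralTwist : G →* G where
  toFun g := g * z ^ (χ g).toAdd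
  map_one' := by simp
  map_mul' g h := by
    have hzh : h * z ^ (χ g).toAdd = z ^ (χ g).toAdd * h := mem_center_iff.mp (zpow_mem hz _) h
    simp only [map_mul, toAdd_mul, zpow_add]
    rw [mul_assoc g h, ← mul_assoc h, hzh]
    group

theorem toAdd_centralTwist (g : G) :
    (χ (centralTwist hz χ g)).toAdd = (1 + (χ z).toAdd) * (χ g).toAdd := by
  simp only [centralTwist, MonoidHom.coe_mk, OneHom.coe_mk, map_mul, map_zpow, toAdd_mul,
    toAdd_zpow, smul_eq_mul]
  ring

theorem centralTwist_injective (h : 1 + (χ z).toAdd ≠ 0) :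
    Function.Injective (centralTwist hz χ) := by
  rw [injective_iff_map_eq_one]
  intro g hg
  have hχg : (χ g).toAdd = 0 := by
    have := toAdd_centralTwist hz χ g
    rw [hg, map_one, toAdd_one] at this
    exact (mul_eq_zero.mp this.symm).resolve_left h
  simpa [centralTwist, hχg] using hg

theorem centralTwist_not_surjective {g : G} (h : ¬ (1 + (χ z).toAdd) ∣ (χ g).toAdd) :
    ¬ Function.Surjective (centralTwist hz χ) := fun hsurj => by
  obtain ⟨f, rfl⟩ := hsurj g
  exact h ⟨_, toAdd_centralTwist hz χ f⟩

end CentralTwist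

namespace B3

def a : B3 := PresentedGroup.of true

def b : B3 := PresentedGroup.of false

theorem braid_rel : a * b * a = b * a * b :=
  PresentedGroup.mk_eq_mk_of_mul_inv_mem rfl

def garside : B3 := a * b * a

theorem garside_mul_a : garside * a = b * garside := by
  rw [garside]
  nth_rw 1 [braid_rel]
  group

theorem garside_mul_b : garside * b = a * garside := by
  rw [garside]
  nth_rw 2 [braid_rel]
  group

theorem garside_sq_mem_center : garside ^ 2 ∈ center B3 := by
  refine PresentedGroup.mem_center_of_commute_of fun x => ?_
  cases x
  · change garside ^ 2 * b = b * garside ^ 2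
    rw [sq, mul_assoc, garside_mul_b, ← mul_assoc, garside_mul_a, mul_assoc]
  · change garside ^ 2 * a = a * garside ^ 2
    rw [sq, mul_assoc, garside_mul_a, ← mul_assoc, garside_mul_b, mul_assoc]

def exponentSum : B3 →* Multiplicative ℤ :=
  PresentedGroup.toGroup (f := fun _ => Multiplicative.ofAdd 1) <| by
    rintro r rfl
    simp only [map_mul, map_inv, FreeGroup.lift_apply_of]
    group

@[simp]
theorem exponentSum_a : exponentSum a = Multiplicative.ofAdd 1 :=
  PresentedGroup.toGroup.of _

@[simp]
theorem exponentSum_b : exponentSum b = Multiplicative.ofAdd 1 :=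
  PresentedGroup.toGroup.of _

theorem toAdd_exponentSum_garside_sq : (exponentSum (garside ^ 2)).toAdd = 6 := by
  simp [garside]

end B3

open B3 in
/-- The braid group `B₃` is not co-Hopfian: there exists an injective
endomorphism of `B₃` that is not surjective. -/
theorem stmt2 : ∃ φ : B3 →* B3, Function.Injective φ ∧ ¬ Function.Surjective φ := by
  refine ⟨centralTwist garside_sq_mem_center exponentSum,
    centralTwist_injective _ _ ?_, centralTwist_not_surjective _ _ (g := a) ?_⟩
  · rw [toAdd_exponentSum_garside_sq]
    norm_num
  · rw [toAdd_exponentSum_garside_sq, exponentSum_a, toAdd_ofAdd]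
    norm_num
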